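/- Let φ be a solution of the normalized equation EQ_λ on (0,∞). Then for every t₀ > 0, φ is bounded on [t₀,∞), i.e., there exists a constant C such that |φ(t)| ≤ C for all t ≥ t₀. -/

import Mathlib

/-! The energy `E = φ'²/2 + λ G(φ)`, with potential `G(x) = |x|^(q+1)/(q+1) - x²/2`, satisfies
`E' = -(n-1) coth(t) φ'² ≤ 0`, so it is nonincreasing on `(0,∞)`. Hence `λ G(φ(t)) ≤ E(t₀)` for
`t ≥ t₀`, and since `G` is coercive for `q > 1`, this bounds `|φ(t)|`. -/

open Real Set

noncomputable def yamabePotential (q x : ℝ) : ℝ := |x| ^ (q + 1) / (q + 1) - x ^ 2 / 2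

noncomputable def yamabeEnergy (lam q : ℝ) (φ φ' : ℝ → ℝ) (t : ℝ) : ℝ :=
  φ' t ^ 2 / 2 + lam * yamabePotential q (φ t)

lemma hasDerivAt_yamabePotential {q : ℝ} (hq : 0 < q) (x : ℝ) :
    HasDerivAt (yamabePotential q) (|x| ^ (q - 1) * x - x) x := by
  have habs := (hasDerivAt_abs_rpow x (p := q + 1) (by linarith)).div_const (q + 1)
  refine (habs.sub ((hasDerivAt_pow 2 x).div_const 2)).congr_deriv ?_
  rw [show q + 1 - 2 = q - 1 by ring]
  field_simp
  ring

lemma hasDerivAt_yamabeEnergy {lam q c t : ℝ} (hq : 0 < q) {φ φ' φ'' : ℝ → ℝ}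
    (hd1 : HasDerivAt φ (φ' t) t) (hd2 : HasDerivAt φ' (φ'' t) t)
    (hode : φ'' t + c * φ' t = lam * (φ t - |φ t| ^ (q - 1) * φ t)) :
    HasDerivAt (yamabeEnergy lam q φ φ') (-(c * φ' t ^ 2)) t := by
  have hkin := (hd2.pow 2).div_const 2
  have hpot := ((hasDerivAt_yamabePotential hq (φ t)).comp t hd1).const_mul lam
  refine (hkin.add hpot).congr_deriv ?_
  push_cast
  linear_combination φ' t * hode

lemma yamabeEnergy_antitoneOn {D : Set ℝ} (hD : Convex ℝ D) (hDo : IsOpen D)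
    {lam q : ℝ} (hq : 0 < q) {c φ φ' φ'' : ℝ → ℝ} (hc : ∀ t ∈ D, 0 ≤ c t)
    (hd1 : ∀ t ∈ D, HasDerivAt φ (φ' t) t) (hd2 : ∀ t ∈ D, HasDerivAt φ' (φ'' t) t)
    (hode : ∀ t ∈ D, φ'' t + c t * φ' t = lam * (φ t - |φ t| ^ (q - 1) * φ t)) :
    AntitoneOn (yamabeEnergy lam q φ φ') D := by
  have hE : ∀ t ∈ D, HasDerivAt (yamabeEnergy lam q φ φ') (-(c t * φ' t ^ 2)) t :=
    fun t ht => hasDerivAt_yamabeEnergy hq (hd1 t ht) (hd2 t ht) (hode t ht)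
  refine antitoneOn_of_hasDerivWithinAt_nonpos (f' := fun t => -(c t * φ' t ^ 2)) hD
    (fun t ht => (hE t ht).continuousAt.continuousWithinAt) (fun t ht => ?_) (fun t ht => ?_)
  · rw [hDo.interior_eq] at ht ⊢
    exact (hE t ht).hasDerivWithinAt
  · rw [hDo.interior_eq] at ht
    exact neg_nonpos.mpr (mul_nonneg (hc t ht) (sq_nonneg _))

lemma exists_abs_le_of_yamabePotential_le {q : ℝ} (hq : 1 < q) (B : ℝ) :
    ∃ C, ∀ x, yamabePotential q x ≤ B → |x| ≤ C := by
  set K := (q + 1) ^ (1 / (q - 1))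
  refine ⟨max K √(2 * B), fun x hx => ?_⟩
  rcases le_or_gt |x| K with hxK | hxK
  · exact le_max_of_le_left hxK
  -- beyond `K` the term `|x|^(q+1)/(q+1)` dominates `x²`
  have hK : 0 < K := rpow_pos_of_pos (by linarith) _
  have hKq : K ^ (q - 1) = q + 1 := by
    rw [← rpow_mul (by linarith), one_div, inv_mul_cancel₀ (by linarith), rpow_one]
  have hpow : q + 1 ≤ |x| ^ (q - 1) := hKq ▸ rpow_le_rpow hK.le hxK.le (by linarith)
  have hsplit : |x| ^ (q + 1) = |x| ^ (q - 1) * x ^ 2 := by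
    rw [show q + 1 = (q - 1) + 2 by ring, rpow_add (hK.trans hxK), rpow_two, sq_abs]
  have hsq : x ^ 2 ≤ |x| ^ (q + 1) / (q + 1) := by
    rw [le_div_iff₀ (by linarith), hsplit, mul_comm]
    exact mul_le_mul_of_nonneg_right hpow (sq_nonneg x)
  unfold yamabePotential at hx
  exact le_max_of_le_right (abs_le_sqrt (by linarith))

/-- Any solution φ of the normalized equation EQ_λ on (0,∞) is bounded on
each ray [t₀,∞) with t₀ > 0. -/
theorem solution_bounded
    (n : ℕ) (hn : 2 ≤ n) (lam q : ℝ) (hlam : 0 < lam) (hq : 1 < q)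
    (φ φ' φ'' : ℝ → ℝ)
    (hd1 : ∀ t ∈ Ioi (0:ℝ), HasDerivAt φ (φ' t) t)
    (hd2 : ∀ t ∈ Ioi (0:ℝ), HasDerivAt φ' (φ'' t) t)
    (hode : ∀ t ∈ Ioi (0:ℝ),
      φ'' t + ((n : ℝ) - 1) * ((exp (2*t) + 1) / (exp (2*t) - 1)) * φ' t
        = lam * (φ t - |φ t| ^ (q - 1) * φ t)) :
    ∀ t₀ : ℝ, 0 < t₀ → ∃ C : ℝ, ∀ t : ℝ, t₀ ≤ t → |φ t| ≤ C := by
  intro t₀ ht₀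
  have hdamp : ∀ t ∈ Ioi (0:ℝ), 0 ≤ ((n : ℝ) - 1) * ((exp (2*t) + 1) / (exp (2*t) - 1)) := by
    intro t ht
    have hn' : (2 : ℝ) ≤ n := by exact_mod_cast hn
    have hexp : 1 < exp (2 * t) := one_lt_exp_iff.mpr (by linarith [mem_Ioi.mp ht])
    exact mul_nonneg (by linarith) (div_nonneg (by positivity) (by linarith))
  have hanti := yamabeEnergy_antitoneOn (convex_Ioi 0) isOpen_Ioi (by linarith) hdamp hd1 hd2 hode
  obtain ⟨C, hC⟩ :=
    exists_abs_le_of_yamabePotential_le hq (yamabeEnergy lam q φ φ' t₀ / lam)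
  refine ⟨C, fun t ht => hC _ ?_⟩
  rw [le_div_iff₀ hlam]
  calc yamabePotential q (φ t) * lam ≤ yamabeEnergy lam q φ φ' t := by
        unfold yamabeEnergy; linarith [sq_nonneg (φ' t)]
    _ ≤ yamabeEnergy lam q φ φ' t₀ := hanti ht₀ (ht₀.trans_le ht) ht
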